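/- For all x, y in the augmentation ideal of the algebra of planar forests, the deconcatenation coproduct satisfies Δ̃_↗(x ↗ y) = (x ⊗ 1) ↗ Δ̃_↗(y) and Δ̃_↗(x ↘ y) = (x ⊗ 1) ↘ Δ̃_↗(y), where (x⊗1) ⋆ (a⊗b) := (x ⋆ a) ⊗ b for ⋆ ∈ {↗, ↘}. -/

import Mathlib

/-! Both graftings change only the first tree of the right factor: `F ⋆ (t :: G) = t' :: G`
with `t'` depending on `F` and `t` alone. So for a nonempty forest `G`, cutting `F ⋆ G` after
its `k`-th tree (`k ≥ 1`) gives `(F ⋆ G.take k) ⊗ G.drop k`: the identity holds on basis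
forests, and both sides are bilinear. The empty forest must be excluded on the right, since
`F ⋆ 1 = F` has cuts while `Δ̃(1) = 0`. -/

open scoped TensorProduct

/-- Planar rooted trees. -/
inductive PTree : Type
  | node : List PTree → PTree

/-- Planar rooted forests. -/
abbrev Forest : Type := List PTree

instance : Monoid Forest where
  mul := fun x y => List.append x y
  one := ([] : List PTree)
  mul_assoc := List.append_assoc
  one_mul := fun _ => rfl
  mul_one := List.append_nil

/-- The algebra `H` of planar rooted forests. -/
abbrev H : Type := MonoidAlgebra ℚ Forest

/-- The basis element of `H` indexed by a forest. -/
noncomputable def bf (F : Forest) : H := MonoidAlgebra.of ℚ Forest F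

/-- Grafting on the left leaf. -/
def graftLeaf (F : Forest) : Forest → Forest
  | [] => F
  | .node c :: rest => .node (graftLeaf F c) :: rest

/-- Grafting on the root. -/
def graftRoot (F : Forest) : Forest → Forest
  | [] => F
  | .node c :: rest => .node (F ++ c) :: rest

/-- The product `↗` extended bilinearly to `H`. -/
noncomputable def glH : H →ₗ[ℚ] H →ₗ[ℚ] H :=
  Finsupp.lift (H →ₗ[ℚ] H) ℚ Forest (fun F =>
    Finsupp.lift H ℚ Forest (fun G => bf (graftLeaf F G)) ∘ₗ (MonoidAlgebra.coeffLinearEquiv ℚ).toLinearMap) ∘ₗ (MonoidAlgebra.coeffLinearEquiv ℚ).toLinearMap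

/-- The product `↘` extended bilinearly to `H`. -/
noncomputable def grH : H →ₗ[ℚ] H →ₗ[ℚ] H :=
  Finsupp.lift (H →ₗ[ℚ] H) ℚ Forest (fun F =>
    Finsupp.lift H ℚ Forest (fun G => bf (graftRoot F G)) ∘ₗ (MonoidAlgebra.coeffLinearEquiv ℚ).toLinearMap) ∘ₗ (MonoidAlgebra.coeffLinearEquiv ℚ).toLinearMap

/-- The reduced deconcatenation coproduct: `Δ̃_↗(F) = Σ F_1 ⊗ F_2` over the
factorizations `F = F_1·F_2` with both factors nonempty. -/
noncomputable def Δdt : H →ₗ[ℚ] H ⊗[ℚ] H :=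
  Finsupp.lift (H ⊗[ℚ] H) ℚ Forest (fun F =>
    ∑ k ∈ Finset.Icc 1 (F.length - 1), bf (F.take k) ⊗ₜ bf (F.drop k)) ∘ₗ (MonoidAlgebra.coeffLinearEquiv ℚ).toLinearMap

def GraftsIntoFirstTree (g : Forest → Forest → Forest) : Prop :=
  ∀ F t, ∃ t' : PTree, ∀ G, g F (t :: G) = t' :: G

theorem graftsIntoFirstTree_graftLeaf : GraftsIntoFirstTree graftLeaf :=
  fun F ⟨c⟩ => ⟨.node (graftLeaf F c), fun _ => by rw [graftLeaf]⟩

theorem graftsIntoFirstTree_graftRoot : GraftsIntoFirstTree graftRoot :=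
  fun F ⟨c⟩ => ⟨.node (F ++ c), fun _ => by rw [graftRoot]⟩

namespace GraftsIntoFirstTree

variable {g : Forest → Forest → Forest} (hg : GraftsIntoFirstTree g) (F : Forest) {G : Forest}
include hg

theorem length_eq (hG : G ≠ []) : (g F G).length = G.length := by
  obtain ⟨t, G, rfl⟩ := List.exists_cons_of_ne_nil hG
  obtain ⟨t', ht'⟩ := hg F t
  simp [ht']

theorem take_eq (hG : G ≠ []) {k : ℕ} (hk : k ≠ 0) : (g F G).take k = g F (G.take k) := by
  obtain ⟨t, G, rfl⟩ := List.exists_cons_of_ne_nil hG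
  obtain ⟨j, rfl⟩ := Nat.exists_eq_succ_of_ne_zero hk
  obtain ⟨t', ht'⟩ := hg F t
  simp [ht']

theorem drop_eq (hG : G ≠ []) {k : ℕ} (hk : k ≠ 0) : (g F G).drop k = G.drop k := by
  obtain ⟨t, G, rfl⟩ := List.exists_cons_of_ne_nil hG
  obtain ⟨j, rfl⟩ := Nat.exists_eq_succ_of_ne_zero hk
  obtain ⟨t', ht'⟩ := hg F t
  simp [ht']

end GraftsIntoFirstTree

noncomputable def graftBilin (g : Forest → Forest → Forest) : H →ₗ[ℚ] H →ₗ[ℚ] H :=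
  Finsupp.lift (H →ₗ[ℚ] H) ℚ Forest (fun F =>
    Finsupp.lift H ℚ Forest (fun G => bf (g F G)) ∘ₗ (MonoidAlgebra.coeffLinearEquiv ℚ).toLinearMap) ∘ₗ (MonoidAlgebra.coeffLinearEquiv ℚ).toLinearMap

theorem glH_eq_graftBilin : glH = graftBilin graftLeaf := rfl

theorem grH_eq_graftBilin : grH = graftBilin graftRoot := rfl

theorem graftBilin_bf_bf (g : Forest → Forest → Forest) (F G : Forest) :
    graftBilin g (bf F) (bf G) = bf (g F G) := by
  simp [graftBilin, bf]

theorem Δdt_bf (F : Forest) :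
    Δdt (bf F) = ∑ k ∈ Finset.Icc 1 (F.length - 1), bf (F.take k) ⊗ₜ[ℚ] bf (F.drop k) := by
  simp [Δdt, bf]

theorem basis_eq_bf (F : Forest) : MonoidAlgebra.basis Forest ℚ F = bf F := by
  simp [bf]

theorem apply_eq_of_coeff_one_eq_zero {M : Type*} [AddCommMonoid M] [Module ℚ M]
    {L₁ L₂ : H →ₗ[ℚ] M} (h : ∀ G : Forest, G ≠ [] → L₁ (bf G) = L₂ (bf G))
    {y : H} (hy : y.coeff 1 = 0) : L₁ y = L₂ y := by
  rw [← (MonoidAlgebra.basis Forest ℚ).linearCombination_repr y, Finsupp.linearCombination_apply]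
  simp only [Finsupp.sum, map_sum, map_smul, basis_eq_bf]
  refine Finset.sum_congr rfl fun G hG => ?_
  rw [h G (by rintro rfl; exact Finsupp.mem_support_iff.mp hG hy)]

section
variable {g : Forest → Forest → Forest} (hg : GraftsIntoFirstTree g)
include hg

theorem Δdt_graftBilin_bf_bf (F : Forest) {G : Forest} (hG : G ≠ []) :
    Δdt (graftBilin g (bf F) (bf G)) = (graftBilin g (bf F)).rTensor H (Δdt (bf G)) := by
  rw [graftBilin_bf_bf, Δdt_bf, Δdt_bf, hg.length_eq F hG, map_sum]
  refine Finset.sum_congr rfl fun k hk => ?_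
  have hk : k ≠ 0 := Nat.one_le_iff_ne_zero.mp (Finset.mem_Icc.mp hk).1
  rw [hg.take_eq F hG hk, hg.drop_eq F hG hk, LinearMap.rTensor_tmul, graftBilin_bf_bf]

theorem Δdt_graftBilin_bf (x : H) {G : Forest} (hG : G ≠ []) :
    Δdt (graftBilin g x (bf G)) = (graftBilin g x).rTensor H (Δdt (bf G)) := by
  have : Δdt ∘ₗ (graftBilin g).flip (bf G) =
      (LinearMap.rTensorHom H ∘ₗ graftBilin g).flip (Δdt (bf G)) :=
    (MonoidAlgebra.basis Forest ℚ).ext fun F => by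
      rw [basis_eq_bf]
      exact Δdt_graftBilin_bf_bf hg F hG
  exact LinearMap.congr_fun this x

theorem Δdt_graftBilin (x : H) {y : H} (hy : y.coeff 1 = 0) :
    Δdt (graftBilin g x y) = (graftBilin g x).rTensor H (Δdt y) :=
  apply_eq_of_coeff_one_eq_zero (L₁ := Δdt ∘ₗ graftBilin g x)
    (L₂ := (graftBilin g x).rTensor H ∘ₗ Δdt) (fun _ hG => Δdt_graftBilin_bf hg x hG) hy

end

theorem reduced_deconcatenation_graft_general (x y : H)
    (hy : y.coeff (1 : Forest) = 0) :
    Δdt (glH x y) = (LinearMap.rTensor H (glH x)) (Δdt y) ∧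
    Δdt (grH x y) = (LinearMap.rTensor H (grH x)) (Δdt y) := by
  rw [glH_eq_graftBilin, grH_eq_graftBilin]
  exact ⟨Δdt_graftBilin graftsIntoFirstTree_graftLeaf x hy,
    Δdt_graftBilin graftsIntoFirstTree_graftRoot x hy⟩

/-- For all `x, y` in the augmentation ideal of the algebra of planar forests:
`Δ̃_↗(x ↗ y) = (x ⊗ 1) ↗ Δ̃_↗(y)` and `Δ̃_↗(x ↘ y) = (x ⊗ 1) ↘ Δ̃_↗(y)`,
where `(x⊗1) ⋆ (a⊗b) = (x ⋆ a) ⊗ b`. -/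
theorem reduced_deconcatenation_graft (x y : H)
    (hx : x.coeff (1 : Forest) = 0) (hy : y.coeff (1 : Forest) = 0) :
    Δdt (glH x y) = (LinearMap.rTensor H (glH x)) (Δdt y) ∧
    Δdt (grH x y) = (LinearMap.rTensor H (grH x)) (Δdt y) :=
  reduced_deconcatenation_graft_general x y hy
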